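/- arXiv:2410.14837 — 5 statements merged into one kernel-verified Lean document; each statement's English description precedes it below -/
import Mathlib

section
/- Gradient orthogonality to rescaling orbits: let L : ℝ^{l×d} × ℝ^{e×l} → ℝ be differentiable at a parameter θ = (W¹, W²), and suppose L is invariant under all neuron rescalings, i.e. L(diag(α)·W¹, W²·diag(α)⁻¹) = L(W¹, W²) for every α ∈ ℝ^l with strictly positive entries. Then for every hidden-neuron index k ∈ {1,…,l}, ∑_{i=1}^{d} W¹_{ki} · (∂L/∂W¹_{ki})(θ) − ∑_{j=1}^{e} W²_{jk} · (∂L/∂W²_{jk})(θ) = 0. -/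
/-!
Rescaling hidden neuron `k` by `exp t` gives a curve through `θ` along which `L` is constant, so
the derivative of `L` at `θ` kills the velocity of that curve at `t = 0`. This velocity is
`(W¹_{k·}, 0) - (0, W²_{·k})` written in the coordinate basis, and applying the derivative
to it gives the stated sum.
-/

open Real

section Rescaling

variable {ι κ μ : Type*}

noncomputable def rescale (α : ι → ℝ) (θ : (ι → κ → ℝ) × (μ → ι → ℝ)) : (ι → κ → ℝ) × (μ → ι → ℝ) :=
  (fun k i => α k * θ.1 k i, fun j k => θ.2 j k * (α k)⁻¹)

/-- The infinitesimal generator of `t ↦ rescale (exp (t • s)) θ`. -/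
def rescaleTangent (s : ι → ℝ) (θ : (ι → κ → ℝ) × (μ → ι → ℝ)) : (ι → κ → ℝ) × (μ → ι → ℝ) :=
  (fun k i => s k * θ.1 k i, fun j k => -(θ.2 j k * s k))

theorem rescale_exp_zero (s : ι → ℝ) (θ : (ι → κ → ℝ) × (μ → ι → ℝ)) :
    rescale (fun k => exp (0 * s k)) θ = θ := by
  simp [rescale]

theorem hasDerivAt_rescale_exp [Fintype ι] [Fintype κ] [Fintype μ] (s : ι → ℝ)
    (θ : (ι → κ → ℝ) × (μ → ι → ℝ)) :
    HasDerivAt (fun t => rescale (fun k => exp (t * s k)) θ) (rescaleTangent s θ) 0 := by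
  have hexp : ∀ k, HasDerivAt (fun t => exp (t * s k)) (s k) 0 := fun k => by
    simpa using ((hasDerivAt_id (0 : ℝ)).mul_const (s k)).exp
  refine .prodMk ?_ ?_
  · refine hasDerivAt_pi.2 fun k => hasDerivAt_pi.2 fun i => ?_
    exact (hexp k).mul_const (θ.1 k i)
  · refine hasDerivAt_pi.2 fun j => hasDerivAt_pi.2 fun k => ?_
    simpa using ((hexp k).inv (exp_pos _).ne').const_mul (θ.2 j k)

theorem rescaleTangent_single [Fintype κ] [Fintype μ] [DecidableEq ι] [DecidableEq κ]
    [DecidableEq μ] (k : ι) (θ : (ι → κ → ℝ) × (μ → ι → ℝ)) :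
    rescaleTangent (Pi.single k 1) θ =
      ∑ i, θ.1 k i • ((Pi.single k (Pi.single i 1), 0) : (ι → κ → ℝ) × (μ → ι → ℝ))
        - ∑ j, θ.2 j k • ((0, Pi.single j (Pi.single k 1)) : (ι → κ → ℝ) × (μ → ι → ℝ)) := by
  refine Prod.ext ?_ ?_
  · funext k' i'
    by_cases h : k' = k
    · subst h; simp [rescaleTangent, Prod.fst_sum, Finset.sum_apply, Pi.single_apply]
    · simp [rescaleTangent, Prod.fst_sum, Finset.sum_apply, Pi.single_apply, h]
  · funext j' k'
    by_cases h : k' = k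
    · subst h; simp [rescaleTangent, Prod.snd_sum, Finset.sum_apply, Pi.single_apply]
    · simp [rescaleTangent, Prod.snd_sum, Finset.sum_apply, Pi.single_apply, h]

end Rescaling

theorem fderiv_apply_eq_zero_of_eventually_const_comp {E F : Type*} [NormedAddCommGroup E]
    [NormedSpace ℝ E] [NormedAddCommGroup F] [NormedSpace ℝ F] {f : E → F} {γ : ℝ → E} {v : E}
    (hf : DifferentiableAt ℝ f (γ 0)) (hγ : HasDerivAt γ v 0)
    (hconst : ∀ᶠ t in nhds 0, f (γ t) = f (γ 0)) :
    fderiv ℝ f (γ 0) v = 0 :=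
  (hf.hasFDerivAt.comp_hasDerivAt 0 hγ).unique
    ((hasDerivAt_const 0 (f (γ 0))).congr_of_eventuallyEq hconst)

theorem fderiv_rescaleTangent_eq_zero {ι κ μ : Type*} [Fintype ι] [Fintype κ] [Fintype μ]
    {L : (ι → κ → ℝ) × (μ → ι → ℝ) → ℝ} {θ : (ι → κ → ℝ) × (μ → ι → ℝ)}
    (hdiff : DifferentiableAt ℝ L θ)
    (hinv : ∀ α : ι → ℝ, (∀ k, 0 < α k) → L (rescale α θ) = L θ) (s : ι → ℝ) :
    fderiv ℝ L θ (rescaleTangent s θ) = 0 := by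
  have key := fderiv_apply_eq_zero_of_eventually_const_comp (rescale_exp_zero s θ ▸ hdiff)
    (hasDerivAt_rescale_exp s θ)
    (.of_forall fun t => by rw [rescale_exp_zero, hinv _ fun k => exp_pos _])
  rwa [rescale_exp_zero] at key

/-- Gradient orthogonality to rescaling orbits. If `L` is
differentiable at `θ = (W¹, W²)` and invariant under all neuron rescalings
`(W¹, W²) ↦ (diag(α)·W¹, W²·diag(α)⁻¹)` (for `α` with strictly positive
entries), then for every hidden neuron `k`,
`∑ᵢ W¹_{ki} ∂L/∂W¹_{ki} − ∑ⱼ W²_{jk} ∂L/∂W²_{jk} = 0`. -/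
theorem gradient_orthogonal_to_rescaling_orbit (l d e : ℕ)
    (L : ((Fin l → Fin d → ℝ) × (Fin e → Fin l → ℝ)) → ℝ)
    (W1 : Fin l → Fin d → ℝ) (W2 : Fin e → Fin l → ℝ)
    (hdiff : DifferentiableAt ℝ L (W1, W2))
    (hinv : ∀ (V1 : Fin l → Fin d → ℝ) (V2 : Fin e → Fin l → ℝ) (α : Fin l → ℝ),
      (∀ k, 0 < α k) →
      L (fun k i => α k * V1 k i, fun j k => V2 j k * (α k)⁻¹) = L (V1, V2))
    (k : Fin l) :
    ∑ i, W1 k i * fderiv ℝ L (W1, W2) (Pi.single k (Pi.single i (1 : ℝ)), 0)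
      - ∑ j, W2 j k * fderiv ℝ L (W1, W2) (0, Pi.single j (Pi.single k (1 : ℝ))) = 0 := by
  have h := fderiv_rescaleTangent_eq_zero hdiff (hinv W1 W2) (Pi.single k 1)
  rw [rescaleTangent_single, map_sub, map_sum, map_sum] at h
  simpa only [map_smul, smul_eq_mul] using h
end

section
/- Connectedness of the invariant set when both dimensions exceed one: if d > 1 and e > 1, then for every c ∈ ℝ^l the invariant set H(c) ⊆ ℝ^{l×d} × ℝ^{e×l}, consisting of all (W¹, W²) such that ∑_{i=1}^{d} (W¹_{ki})² − ∑_{j=1}^{e} (W²_{jk})² = c_k for every k ∈ {1,…,l}, is a connected subset (with the subspace topology). -/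
/-- The invariant set `H(c)`: parameters `(W¹, W²)` such that
`∑ᵢ (W¹_{ki})² − ∑ⱼ (W²_{jk})² = c_k` for every hidden neuron `k`. -/
def invariantSet (l d e : ℕ) (c : Fin l → ℝ) :
    Set ((Fin l → Fin d → ℝ) × (Fin e → Fin l → ℝ)) :=
  {θ | ∀ k, ∑ i, (θ.1 k i) ^ 2 - ∑ j, (θ.2 j k) ^ 2 = c k}

/-!
Neuron by neuron, `H(c)` is a product over `k` of hyperboloids `‖x‖² - ‖y‖² = c_k` in
`ℝ^d × ℝ^e`. Each hyperboloid is the continuous image of `S^{d-1} × S^{e-1} × ℝ` under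
`(u, v, t) ↦ (√(c⁺ + t²) u, √(c⁻ + t²) v)`, and spheres in dimension at least two are connected.
-/

open Metric Set

section NormedSpace

variable {E F : Type*} [NormedAddCommGroup E] [NormedSpace ℝ E]
  [NormedAddCommGroup F] [NormedSpace ℝ F]

theorem exists_mem_sphere_norm_smul_eq [Nontrivial E] (x : E) :
    ∃ u ∈ sphere (0 : E) 1, ‖x‖ • u = x := by
  rcases eq_or_ne x 0 with rfl | hx
  · obtain ⟨u, hu⟩ := NormedSpace.sphere_nonempty_rclike ℝ (E := E) zero_le_one
    exact ⟨u, hu, by simp⟩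
  · refine ⟨‖x‖⁻¹ • x, by simpa using norm_smul_inv_norm (𝕜 := ℝ) hx, ?_⟩
    rw [smul_inv_smul₀ (norm_ne_zero_iff.mpr hx)]

theorem norm_sq_sqrt_smul_of_mem_sphere {a : ℝ} (ha : 0 ≤ a) {u : E} (hu : u ∈ sphere (0 : E) 1) :
    ‖√a • u‖ ^ 2 = a := by
  rw [norm_smul, mem_sphere_zero_iff_norm.mp hu, Real.norm_of_nonneg (Real.sqrt_nonneg a),
    mul_one, Real.sq_sqrt ha]

theorem isConnected_setOf_norm_sq_sub_norm_sq_eq (hE : 1 < Module.rank ℝ E)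
    (hF : 1 < Module.rank ℝ F) (c : ℝ) :
    IsConnected {p : E × F | ‖p.1‖ ^ 2 - ‖p.2‖ ^ 2 = c} := by
  have : Nontrivial E := rank_pos_iff_nontrivial.mp (zero_lt_one.trans hE)
  have : Nontrivial F := rank_pos_iff_nontrivial.mp (zero_lt_one.trans hF)
  set g : E × F × ℝ → E × F := fun q => (√(c⁺ + q.2.2 ^ 2) • q.1, √(c⁻ + q.2.2 ^ 2) • q.2.1)
  have hg : Continuous g := by fun_prop
  have himage : g '' (sphere 0 1 ×ˢ sphere 0 1 ×ˢ univ) =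
      {p : E × F | ‖p.1‖ ^ 2 - ‖p.2‖ ^ 2 = c} := by
    apply Subset.antisymm
    · rintro _ ⟨⟨u, v, t⟩, ⟨hu, hv, -⟩, rfl⟩
      change ‖√(c⁺ + t ^ 2) • u‖ ^ 2 - ‖√(c⁻ + t ^ 2) • v‖ ^ 2 = c
      rw [norm_sq_sqrt_smul_of_mem_sphere (add_nonneg (posPart_nonneg c) (sq_nonneg t)) hu,
        norm_sq_sqrt_smul_of_mem_sphere (add_nonneg (negPart_nonneg c) (sq_nonneg t)) hv]
      linarith [posPart_sub_negPart c]
    · rintro ⟨x, y⟩ (hxy : ‖x‖ ^ 2 - ‖y‖ ^ 2 = c)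
      obtain ⟨u, hu, hxu⟩ := exists_mem_sphere_norm_smul_eq x
      obtain ⟨v, hv, hyv⟩ := exists_mem_sphere_norm_smul_eq y
      have hc : c⁻ ≤ ‖y‖ ^ 2 := max_le (by linarith [sq_nonneg ‖x‖]) (sq_nonneg _)
      set t := √(‖y‖ ^ 2 - c⁻)
      have ht : t ^ 2 = ‖y‖ ^ 2 - c⁻ := Real.sq_sqrt (by linarith)
      have hx : √(c⁺ + t ^ 2) = ‖x‖ := by
        rw [ht, show c⁺ + (‖y‖ ^ 2 - c⁻) = ‖x‖ ^ 2 by linarith [posPart_sub_negPart c],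
          Real.sqrt_sq (norm_nonneg _)]
      have hy : √(c⁻ + t ^ 2) = ‖y‖ := by
        rw [ht, add_sub_cancel, Real.sqrt_sq (norm_nonneg _)]
      exact ⟨(u, v, t), ⟨hu, hv, mem_univ t⟩, by simp only [g, hx, hy, hxu, hyv]⟩
  rw [← himage]
  exact ((isConnected_sphere hE 0 zero_le_one).prod
    ((isConnected_sphere hF 0 zero_le_one).prod isConnected_univ)).image g hg.continuousOn

end NormedSpace

theorem isConnected_setOf_sum_sq_sub_sum_sq_eq {d e : ℕ} (hd : 1 < d) (he : 1 < e) (a : ℝ) :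
    IsConnected {p : (Fin d → ℝ) × (Fin e → ℝ) | ∑ i, p.1 i ^ 2 - ∑ j, p.2 j ^ 2 = a} := by
  have hrank {n : ℕ} (hn : 1 < n) : 1 < Module.rank ℝ (EuclideanSpace ℝ (Fin n)) := by
    rw [← Module.finrank_eq_rank, finrank_euclideanSpace_fin]; exact_mod_cast hn
  have himage : (fun q : EuclideanSpace ℝ (Fin d) × EuclideanSpace ℝ (Fin e) =>
      (q.1.ofLp, q.2.ofLp)) '' {q | ‖q.1‖ ^ 2 - ‖q.2‖ ^ 2 = a} =
      {p : (Fin d → ℝ) × (Fin e → ℝ) | ∑ i, p.1 i ^ 2 - ∑ j, p.2 j ^ 2 = a} := by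
    apply Subset.antisymm
    · rintro _ ⟨⟨x, y⟩, hq, rfl⟩
      simpa [EuclideanSpace.real_norm_sq_eq] using hq
    · rintro ⟨x, y⟩ hp
      exact ⟨(WithLp.toLp 2 x, WithLp.toLp 2 y), by simpa [EuclideanSpace.real_norm_sq_eq] using hp,
        rfl⟩
  rw [← himage]
  exact (isConnected_setOf_norm_sq_sub_norm_sq_eq (hrank hd) (hrank he) a).image _
    (by fun_prop)

theorem invariantSet_eq_image_pi (l d e : ℕ) (c : Fin l → ℝ) :
    invariantSet l d e c =
      (fun f : Fin l → (Fin d → ℝ) × (Fin e → ℝ) => (fun k => (f k).1, fun j k => (f k).2 j)) ''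
        univ.pi fun k => {p | ∑ i, p.1 i ^ 2 - ∑ j, p.2 j ^ 2 = c k} := by
  ext θ
  constructor
  · intro hθ
    exact ⟨fun k => (θ.1 k, fun j => θ.2 j k), fun k _ => hθ k, rfl⟩
  · rintro ⟨f, hf, rfl⟩ k
    exact hf k (mem_univ k)

/-- If `d > 1` and `e > 1`, then the invariant set `H(c)` is
connected for every `c`. -/
theorem invariantSet_connected_of_dims_gt_one (l d e : ℕ) (hd : 1 < d) (he : 1 < e)
    (c : Fin l → ℝ) :
    IsConnected (invariantSet l d e c) := by
  rw [invariantSet_eq_image_pi]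
  exact (isConnected_univ_pi.mpr fun k => isConnected_setOf_sum_sq_sub_sum_sq_eq hd he (c k)).image
    _ (by fun_prop)
end

section
/- Number of connected components when the output is scalar: if d > 1 and e = 1, then for every c ∈ ℝ^l the invariant set H(c) ⊆ ℝ^{l×d} × ℝ^{1×l}, consisting of all (W¹, W²) such that ∑_{i=1}^{d} (W¹_{ki})² − (W²_{1k})² = c_k for every k ∈ {1,…,l}, has exactly 2^{l_-} connected components, where l_- is the number of indices k with c_k < 0. In particular, if l_- > 0 then H(c) is disconnected. -/
open Set Metric

private lemma sphere_pc (d : ℕ) (hd : 1 < d) {r : ℝ} (hr : 0 ≤ r) :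
    IsPathConnected {x : Fin d → ℝ | ∑ i, x i ^ 2 = r} := by
  have hrank : 1 < Module.rank ℝ (EuclideanSpace ℝ (Fin d)) := by
    rw [← Module.finrank_eq_rank ℝ (EuclideanSpace ℝ (Fin d)), finrank_euclideanSpace_fin]
    exact_mod_cast hd
  have hs := isPathConnected_sphere hrank (0 : EuclideanSpace ℝ (Fin d)) (Real.sqrt_nonneg r)
  have := hs.image (f := fun x : EuclideanSpace ℝ (Fin d) => (x : Fin d → ℝ))
    (by exact (EuclideanSpace.equiv (Fin d) ℝ).continuous)
  convert this using 1
  ext x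
  simp only [mem_image, mem_setOf_eq, mem_sphere_iff_norm, sub_zero]
  constructor
  · intro hx
    refine ⟨WithLp.toLp 2 x, ?_, rfl⟩
    rw [EuclideanSpace.norm_eq]
    simp only [Real.norm_eq_abs, sq_abs, PiLp.toLp_apply]
    rw [hx]
  · rintro ⟨y, hy, rfl⟩
    rw [EuclideanSpace.norm_eq] at hy
    simp only [Real.norm_eq_abs, sq_abs] at hy
    have h1 : Real.sqrt (∑ i, y i ^ 2) ^ 2 = Real.sqrt r ^ 2 := by rw [hy]
    rwa [Real.sq_sqrt (by positivity), Real.sq_sqrt hr] at h1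

/-- Branch of the hyperboloid when `c < 0`. -/
private lemma branch_pc (d : ℕ) {c : ℝ} (hc : c < 0) (b : Bool) :
    IsPathConnected {p : (Fin d → ℝ) × ℝ |
      (∑ i, p.1 i ^ 2) - p.2 ^ 2 = c ∧ (0 < p.2 ↔ b = true)} := by
  set ε : ℝ := if b then 1 else -1 with hε
  have hφ : Continuous fun x : Fin d → ℝ => ((x, ε * Real.sqrt (∑ i, x i ^ 2 - c)) :
      (Fin d → ℝ) × ℝ) := by fun_prop
  have hpos : ∀ x : Fin d → ℝ, (0:ℝ) < ∑ i, x i ^ 2 - c := by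
    intro x
    have : (0:ℝ) ≤ ∑ i, x i ^ 2 := by positivity
    linarith
  have himg : {p : (Fin d → ℝ) × ℝ |
      (∑ i, p.1 i ^ 2) - p.2 ^ 2 = c ∧ (0 < p.2 ↔ b = true)} =
      (fun x : Fin d → ℝ => ((x, ε * Real.sqrt (∑ i, x i ^ 2 - c)) :
        (Fin d → ℝ) × ℝ)) '' univ := by
    ext ⟨x, y⟩
    simp only [mem_setOf_eq, image_univ, mem_range]
    constructor
    · rintro ⟨h1, h2⟩
      refine ⟨x, ?_⟩
      have hy2 : y ^ 2 = ∑ i, x i ^ 2 - c := by linarith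
      have hyne : y ≠ 0 := by
        intro h0; rw [h0] at hy2; have := hpos x; simp at hy2; linarith
      have habs : Real.sqrt (∑ i, x i ^ 2 - c) = |y| := by
        rw [← hy2, Real.sqrt_sq_eq_abs]
      refine Prod.ext rfl ?_
      cases b with
      | true =>
        have hy : 0 < y := h2.mpr rfl
        show ε * Real.sqrt (∑ i, x i ^ 2 - c) = y
        rw [habs, abs_of_pos hy, hε]
        simp
      | false =>
        have hy : y < 0 := by
          rcases lt_trichotomy y 0 with h | h | h
          · exact h
          · exact absurd h hyne
          · exact absurd (h2.mp h) (by simp)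
        show ε * Real.sqrt (∑ i, x i ^ 2 - c) = y
        rw [habs, abs_of_neg hy, hε]
        simp
    · rintro ⟨z, hz⟩
      cases hz
      have hsq : Real.sqrt (∑ i, x i ^ 2 - c) ^ 2 = ∑ i, x i ^ 2 - c :=
        Real.sq_sqrt (le_of_lt (hpos x))
      have hε2 : ε ^ 2 = 1 := by cases b <;> simp [hε]
      constructor
      · rw [mul_pow, hε2, one_mul, hsq]; ring
      · have hspos : 0 < Real.sqrt (∑ i, x i ^ 2 - c) := Real.sqrt_pos.mpr (hpos x)
        cases b with
        | true =>
          rw [hε, if_pos rfl, one_mul]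
          simpa using hspos
        | false =>
          rw [hε, if_neg (by simp : ¬ (false = true))]
          constructor
          · intro h; nlinarith
          · intro h; exact absurd h (by simp)
  rw [himg]
  exact ((convex_univ : Convex ℝ (univ : Set (Fin d → ℝ))).isPathConnected
    ⟨0, trivial⟩).image hφ

/-- The hyperboloid when `0 ≤ c`. -/
private lemma nonneg_pc (d : ℕ) (hd : 1 < d) {c : ℝ} (hc : 0 ≤ c) :
    IsPathConnected {p : (Fin d → ℝ) × ℝ | (∑ i, p.1 i ^ 2) - p.2 ^ 2 = c} := by
  set T := {p : (Fin d → ℝ) × ℝ | (∑ i, p.1 i ^ 2) - p.2 ^ 2 = c} with hT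
  have hSpc := sphere_pc d hd hc
  obtain ⟨x₀, hx₀, -⟩ := sphere_pc d hd hc
  have hSig : IsPathConnected ((fun x : Fin d → ℝ => ((x, (0:ℝ)) : (Fin d → ℝ) × ℝ)) ''
      {x : Fin d → ℝ | ∑ i, x i ^ 2 = c}) := hSpc.image (by fun_prop)
  have hSigT : ((fun x : Fin d → ℝ => ((x, (0:ℝ)) : (Fin d → ℝ) × ℝ)) ''
      {x : Fin d → ℝ | ∑ i, x i ^ 2 = c}) ⊆ T := by
    rintro p ⟨x, hx, rfl⟩
    simp only [hT, mem_setOf_eq]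
    simpa using hx
  -- every point of T is joined inside T to a point of Σ
  have key : ∀ p ∈ T, ∃ q ∈ (fun x : Fin d → ℝ => ((x, (0:ℝ)) : (Fin d → ℝ) × ℝ)) ''
      {x : Fin d → ℝ | ∑ i, x i ^ 2 = c}, JoinedIn T p q := by
    intro p hp
    obtain ⟨x, y⟩ := p
    simp only [hT, mem_setOf_eq] at hp
    by_cases hzero : c + y ^ 2 = 0
    · have hy : y = 0 := by nlinarith [sq_nonneg y]
      have hcz : c = 0 := by nlinarith [sq_nonneg y]
      refine ⟨(x, y), ⟨x, ?_, by rw [hy]⟩, JoinedIn.refl (by simp [hT, mem_setOf_eq, hp])⟩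
      simp only [mem_setOf_eq]; nlinarith
    · have hden : (0:ℝ) < c + y ^ 2 := by
        rcases lt_or_eq_of_le (by positivity : (0:ℝ) ≤ c + y ^ 2) with h | h
        · exact h
        · exact absurd h.symm hzero
      set r : ℝ → ℝ := fun t => Real.sqrt ((c + (1 - t) ^ 2 * y ^ 2) / (c + y ^ 2)) with hr
      have hrcont : Continuous r := by
        apply Real.continuous_sqrt.comp
        fun_prop
      have hrsq : ∀ t : ℝ, r t ^ 2 = (c + (1 - t) ^ 2 * y ^ 2) / (c + y ^ 2) := by
        intro t
        apply Real.sq_sqrt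
        positivity
      set f : ℝ → (Fin d → ℝ) × ℝ := fun t => (fun i => x i * r t, (1 - t) * y) with hf
      have hfc : Continuous f := by fun_prop
      have hsum : ∀ t : ℝ, ∑ i, (x i * r t) ^ 2 = c + (1 - t) ^ 2 * y ^ 2 := by
        intro t
        have : ∑ i, (x i * r t) ^ 2 = (∑ i, x i ^ 2) * r t ^ 2 := by
          rw [Finset.sum_mul]; congr 1; ext i; ring
        rw [this, hrsq t]
        have hx2 : ∑ i, x i ^ 2 = c + y ^ 2 := by linarith
        rw [hx2]
        field_simp
      have hf0 : f 0 = (x, y) := by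
        simp only [hf]
        have : r 0 = 1 := by
          simp only [hr]
          rw [show (c + (1 - (0:ℝ)) ^ 2 * y ^ 2) = c + y ^ 2 by ring, div_self (ne_of_gt hden)]
          exact Real.sqrt_one
        rw [this]
        simp
      have hmem : ∀ t ∈ (Set.Icc (0:ℝ) 1), f t ∈ T := by
        intro t _
        simp only [hf, hT, mem_setOf_eq]
        rw [hsum t]; ring
      refine ⟨f 1, ⟨fun i => x i * r 1, ?_, by simp [hf]⟩, ?_⟩
      · simp only [mem_setOf_eq]
        rw [hsum 1]; ring
      · have := JoinedIn.ofLine hfc.continuousOn hf0 rfl (by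
          intro p hp'
          obtain ⟨t, ht, rfl⟩ := hp'
          exact hmem t ht)
        exact this
  obtain ⟨q₀, hq0S, _⟩ := key (x₀, 0) (hSigT ⟨x₀, hx₀, rfl⟩)
  refine ⟨(x₀, 0), hSigT ⟨x₀, hx₀, rfl⟩, ?_⟩
  intro p hp
  obtain ⟨q, hqS, hjoin⟩ := key p hp
  exact (hjoin.trans ((hSig.joinedIn q hqS (x₀, 0) ⟨x₀, hx₀, rfl⟩).mono hSigT)).symm
/-- Key per-coordinate lemma: two points on the level set `∑ xᵢ² − y² = c` with matching
sign of `y` (when `c < 0`) are joined by a path staying on the level set and keeping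
the sign of the second coordinate when `c < 0`. -/
private lemma key_joined (d : ℕ) (hd : 1 < d) (c : ℝ) (x x' : Fin d → ℝ) (y y' : ℝ)
    (h : (∑ i, x i ^ 2) - y ^ 2 = c) (h' : (∑ i, x' i ^ 2) - y' ^ 2 = c)
    (hs : c < 0 → (0 < y ↔ 0 < y')) :
    ∃ γ : Path ((x, y) : (Fin d → ℝ) × ℝ) (x', y'),
      ∀ t, (∑ i, (γ t).1 i ^ 2) - (γ t).2 ^ 2 = c ∧ (c < 0 → (0 < (γ t).2 ↔ 0 < y)) := by
  rcases lt_or_ge c 0 with hc | hc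
  · set b : Bool := decide (0 < y) with hb
    set F := {p : (Fin d → ℝ) × ℝ |
      (∑ i, p.1 i ^ 2) - p.2 ^ 2 = c ∧ (0 < p.2 ↔ b = true)} with hF
    have hmem1 : ((x, y) : (Fin d → ℝ) × ℝ) ∈ F := ⟨h, by simp [hb]⟩
    have hmem2 : ((x', y') : (Fin d → ℝ) × ℝ) ∈ F := ⟨h', by simp [hb, ← hs hc]⟩
    have hj : JoinedIn F (x, y) (x', y') := (branch_pc d hc b).joinedIn _ hmem1 _ hmem2
    refine ⟨hj.somePath, fun t => ?_⟩
    have := hj.somePath_mem t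
    refine ⟨this.1, fun _ => ?_⟩
    rw [this.2, hb]
    simp
  · set F := {p : (Fin d → ℝ) × ℝ | (∑ i, p.1 i ^ 2) - p.2 ^ 2 = c} with hF
    have hj : JoinedIn F (x, y) (x', y') := (nonneg_pc d hd hc).joinedIn _ h _ h'
    exact ⟨hj.somePath, fun t => ⟨hj.somePath_mem t, fun hlt => absurd hlt (not_lt.mpr hc)⟩⟩
private lemma mem_inv_iff {l d : ℕ} {c : Fin l → ℝ}
    {θ : (Fin l → Fin d → ℝ) × (Fin 1 → Fin l → ℝ)} :
    θ ∈ invariantSet l d 1 c ↔ ∀ k, (∑ i, θ.1 k i ^ 2) - (θ.2 (0 : Fin 1) k) ^ 2 = c k := by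
  unfold invariantSet
  simp [Fin.sum_univ_one]

private lemma joined_of_signs (l d : ℕ) (hd : 1 < d) (c : Fin l → ℝ)
    (θ θ' : ↥(invariantSet l d 1 c))
    (hsign : ∀ k, c k < 0 → (0 < θ.1.2 (0 : Fin 1) k ↔ 0 < θ'.1.2 (0 : Fin 1) k)) :
    Joined θ θ' := by
  have hθ := mem_inv_iff.mp θ.2
  have hθ' := mem_inv_iff.mp θ'.2
  have h := fun k => key_joined d hd (c k) (θ.1.1 k) (θ'.1.1 k)
    (θ.1.2 (0 : Fin 1) k) (θ'.1.2 (0 : Fin 1) k) (hθ k) (hθ' k) (hsign k)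
  choose γ hγ using h
  let Γ : unitInterval → ↥(invariantSet l d 1 c) := fun t =>
    ⟨(fun k => (γ k t).1, fun _ k => (γ k t).2), by
      refine mem_inv_iff.mpr fun k => ?_
      exact (hγ k t).1⟩
  have hcont : Continuous Γ := by
    apply Continuous.subtype_mk
    refine Continuous.prodMk ?_ ?_
    · exact continuous_pi fun k => continuous_fst.comp (γ k).continuous
    · exact continuous_pi fun j => continuous_pi fun k =>
        continuous_snd.comp (γ k).continuous
  refine ⟨⟨⟨Γ, hcont⟩, ?_, ?_⟩⟩
  · apply Subtype.ext
    apply Prod.ext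
    · funext k
      exact congrArg Prod.fst (γ k).source
    · funext j k
      have h0 : (γ k 0).2 = θ.1.2 (0 : Fin 1) k := congrArg Prod.snd (γ k).source
      have hj : j = 0 := Subsingleton.elim _ _
      rw [hj]
      exact h0
  · apply Subtype.ext
    apply Prod.ext
    · funext k
      exact congrArg Prod.fst (γ k).target
    · funext j k
      have h0 : (γ k 1).2 = θ'.1.2 (0 : Fin 1) k := congrArg Prod.snd (γ k).target
      have hj : j = 0 := Subsingleton.elim _ _
      rw [hj]
      exact h0
/-- If `d > 1` and `e = 1`, the invariant set `H(c)` has exactly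
`2^{l₋}` connected components, where `l₋` is the number of indices `k` with
`c_k < 0`; in particular it is disconnected when `l₋ > 0`. -/
theorem invariantSet_components_scalar_output (l d : ℕ) (hd : 1 < d) (c : Fin l → ℝ) :
    Nat.card (ConnectedComponents ↥(invariantSet l d 1 c)) =
        2 ^ (Finset.univ.filter (fun k => c k < 0)).card ∧
      (0 < (Finset.univ.filter (fun k => c k < 0)).card →
        ¬ IsConnected (invariantSet l d 1 c)) := by
  classical
  have hd0 : (0 : ℕ) < d := lt_trans zero_lt_one hd
  -- nonvanishing of the second coordinate where c k < 0
  have hne : ∀ (θ : ↥(invariantSet l d 1 c)) (k : Fin l), c k < 0 →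
      θ.1.2 (0 : Fin 1) k ≠ 0 := by
    intro θ k hk h0
    have h := mem_inv_iff.mp θ.2 k
    rw [h0] at h
    have hsum : (0:ℝ) ≤ ∑ i, θ.1.1 k i ^ 2 := by positivity
    simp only [ne_eq, OfNat.ofNat_ne_zero, not_false_eq_true, zero_pow, sub_zero] at h
    linarith
  -- the sign map
  set f : ↥(invariantSet l d 1 c) → ({k : Fin l // c k < 0} → Bool) :=
    fun θ k => decide (0 < θ.1.2 (0 : Fin 1) k.1) with hf
  have hfc : Continuous f := by
    refine continuous_pi fun k => ?_
    rw [continuous_discrete_rng]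
    intro b
    have hval : Continuous fun θ : ↥(invariantSet l d 1 c) => θ.1.2 (0 : Fin 1) k.1 := by
      fun_prop
    cases b with
    | false =>
      have hpre : (fun θ : ↥(invariantSet l d 1 c) =>
          decide (0 < θ.1.2 (0 : Fin 1) k.1)) ⁻¹' {false}
          = (fun θ : ↥(invariantSet l d 1 c) => θ.1.2 (0 : Fin 1) k.1) ⁻¹' Set.Iio 0 := by
        ext θ
        simp only [Set.mem_preimage, Set.mem_singleton_iff, Set.mem_Iio,
          decide_eq_false_iff_not, not_lt]
        constructor
        · intro h
          exact lt_of_le_of_ne h (hne θ k.1 k.2)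
        · intro h; linarith
      exact hpre ▸ isOpen_Iio.preimage hval
    | true =>
      have hpre : (fun θ : ↥(invariantSet l d 1 c) =>
          decide (0 < θ.1.2 (0 : Fin 1) k.1)) ⁻¹' {true}
          = (fun θ : ↥(invariantSet l d 1 c) => θ.1.2 (0 : Fin 1) k.1) ⁻¹' Set.Ioi 0 := by
        ext θ
        simp [Set.mem_preimage, Set.mem_Ioi]
      exact hpre ▸ isOpen_Ioi.preimage hval
  -- surjectivity of the sign map
  have hsurj : Function.Surjective f := by
    intro s
    set W1 : Fin l → Fin d → ℝ :=
      fun k i => if i = (⟨0, hd0⟩ : Fin d) then Real.sqrt (max (c k) 0) else 0 with hW1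
    set W2 : Fin 1 → Fin l → ℝ :=
      fun _ k => if h : c k < 0 then (if s ⟨k, h⟩ then 1 else -1) * Real.sqrt (-c k)
        else 0 with hW2
    have h1 : ∀ k, ∑ i, W1 k i ^ 2 = max (c k) 0 := by
      intro k
      have heach : ∀ i, W1 k i ^ 2 =
          if i = (⟨0, hd0⟩ : Fin d) then max (c k) 0 else 0 := by
        intro i
        by_cases hi : i = (⟨0, hd0⟩ : Fin d) <;>
          simp [hW1, hi, Real.sq_sqrt (le_max_right (c k) 0)]
      rw [Finset.sum_congr rfl fun i _ => heach i, Finset.sum_ite_eq' Finset.univ]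
      simp
    have h2 : ∀ k, W2 (0 : Fin 1) k ^ 2 = if c k < 0 then -c k else 0 := by
      intro k
      by_cases h : c k < 0
      · have hcn : (0:ℝ) ≤ -c k := by linarith
        rw [hW2]
        simp only [h, dif_pos, if_pos]
        rw [mul_pow, Real.sq_sqrt hcn]
        cases s ⟨k, h⟩ <;> simp
      · simp [hW2, h]
    have hmem : (W1, W2) ∈ invariantSet l d 1 c := by
      refine mem_inv_iff.mpr fun k => ?_
      rw [h1 k, h2 k]
      by_cases h : c k < 0
      · rw [if_pos h, max_eq_right (le_of_lt h)]; ring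
      · rw [if_neg h, max_eq_left (not_lt.mp h)]; ring
    refine ⟨⟨(W1, W2), hmem⟩, ?_⟩
    funext k
    have hk := k.2
    have hsqrt : 0 < Real.sqrt (-c k.1) := Real.sqrt_pos.mpr (by linarith)
    have hk' : (⟨k.1, hk⟩ : {k : Fin l // c k < 0}) = k := Subtype.ext rfl
    have hW2k : W2 (0 : Fin 1) k.1 = (if s k then 1 else -1) * Real.sqrt (-c k.1) := by
      simp only [hW2]
      rw [dif_pos hk, hk']
    show decide (0 < W2 (0 : Fin 1) k.1) = s k
    rw [hW2k]
    cases hsk : s k with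
    | true =>
      rw [if_pos rfl, one_mul]
      exact decide_eq_true hsqrt
    | false =>
      rw [if_neg (by simp), neg_one_mul]
      apply decide_eq_false
      simp only [not_lt]
      linarith
  -- the induced map on connected components is a bijection
  have hB : Function.Bijective hfc.connectedComponentsLift := by
    constructor
    · intro a b hab
      obtain ⟨θ, rfl⟩ := ConnectedComponents.surjective_coe a
      obtain ⟨θ', rfl⟩ := ConnectedComponents.surjective_coe b
      rw [hfc.connectedComponentsLift_apply_coe,
        hfc.connectedComponentsLift_apply_coe] at hab
      have hsign : ∀ k, c k < 0 →
          (0 < θ.1.2 (0 : Fin 1) k ↔ 0 < θ'.1.2 (0 : Fin 1) k) := by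
        intro k hk
        have := congrFun hab ⟨k, hk⟩
        simpa [hf, decide_eq_decide] using this
      have hjoin := joined_of_signs l d hd c θ θ' hsign
      rw [ConnectedComponents.coe_eq_coe']
      exact pathComponent_subset_component θ' hjoin.symm
    · intro s
      obtain ⟨θ, hθ⟩ := hsurj s
      exact ⟨ConnectedComponents.mk θ, by
        rw [hfc.connectedComponentsLift_apply_coe, hθ]⟩
  have hcard : Nat.card (ConnectedComponents ↥(invariantSet l d 1 c)) =
      2 ^ (Finset.univ.filter (fun k => c k < 0)).card := by
    rw [Nat.card_congr (Equiv.ofBijective _ hB), Nat.card_eq_fintype_card,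
      Fintype.card_fun, Fintype.card_bool, Fintype.card_subtype]
  refine ⟨hcard, fun hpos hconn => ?_⟩
  haveI : ConnectedSpace ↥(invariantSet l d 1 c) :=
    isConnected_iff_connectedSpace.mp hconn
  haveI : Nonempty ↥(invariantSet l d 1 c) := hconn.nonempty.to_subtype
  have hsub : Subsingleton (ConnectedComponents ↥(invariantSet l d 1 c)) := by
    constructor
    intro a b
    obtain ⟨θ, rfl⟩ := ConnectedComponents.surjective_coe a
    obtain ⟨θ', rfl⟩ := ConnectedComponents.surjective_coe b
    rw [ConnectedComponents.coe_eq_coe, PreconnectedSpace.connectedComponent_eq_univ,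
      PreconnectedSpace.connectedComponent_eq_univ]
  have h1 : Nat.card (ConnectedComponents ↥(invariantSet l d 1 c)) = 1 :=
    Nat.card_eq_one_iff_unique.mpr ⟨hsub, Nonempty.map ConnectedComponents.mk ‹_›⟩
  rw [hcard] at h1
  have h2 : 1 < 2 ^ (Finset.univ.filter (fun k => c k < 0)).card :=
    Nat.one_lt_two_pow_iff.mpr (Nat.pos_iff_ne_zero.mp hpos)
  omega
end

section
/- Number of connected components when the input is scalar: if d = 1 and e > 1, then for every c ∈ ℝ^l the invariant set H(c) ⊆ ℝ^{l×1} × ℝ^{e×l}, consisting of all (W¹, W²) such that (W¹_{k1})² − ∑_{j=1}^{e} (W²_{jk})² = c_k for every k ∈ {1,…,l}, has exactly 2^{l_+} connected components, where l_+ is the number of indices k with c_k > 0. -/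
namespace InvProof
open unitInterval

/-- One-neuron hSlice. -/
def hSlice (e : ℕ) (c : ℝ) : Set (ℝ × (Fin e → ℝ)) :=
  {p | p.1 ^ 2 - ∑ j, (p.2 j) ^ 2 = c}

lemma mem_hSlice {e : ℕ} {c : ℝ} {p : ℝ × (Fin e → ℝ)} :
    p ∈ hSlice e c ↔ p.1 ^ 2 - ∑ j, (p.2 j) ^ 2 = c := Iff.rfl

lemma sq_sum_nonneg {e : ℕ} (v : Fin e → ℝ) : 0 ≤ ∑ j, v j ^ 2 :=
  Finset.sum_nonneg fun _ _ => sq_nonneg _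

/-- Generic JoinedIn.image. -/
lemma joinedIn_image {X Y : Type*} [TopologicalSpace X] [TopologicalSpace Y]
    {F : Set X} {x y : X} (h : JoinedIn F x y) {f : X → Y} (hf : Continuous f) :
    JoinedIn (f '' F) (f x) (f y) :=
  ⟨h.somePath.map hf, fun t => ⟨h.somePath t, h.somePath_mem t, rfl⟩⟩

/-- Points on the hSlice with positive first coordinate are joined to `(√c, 0)`. -/
lemma joined_pos_base {e : ℕ} {c : ℝ} (hc : 0 < c) {p : ℝ × (Fin e → ℝ)}
    (hp : p ∈ hSlice e c) (hpos : 0 < p.1) :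
    JoinedIn (hSlice e c) p (Real.sqrt c, 0) := by
  set Q : ℝ := ∑ j, (p.2 j) ^ 2 with hQ
  have hQ0 : 0 ≤ Q := sq_sum_nonneg _
  have hpc : p.1 ^ 2 = c + Q := by
    have := hp; rw [mem_hSlice] at this; linarith
  have key : ∀ t : ℝ, 0 ≤ c + t ^ 2 * Q := by
    intro t
    have : 0 ≤ t ^ 2 * Q := mul_nonneg (sq_nonneg _) hQ0
    linarith
  refine ⟨⟨⟨fun t => (Real.sqrt (c + (1 - (t : ℝ)) ^ 2 * Q), fun j => (1 - (t : ℝ)) * p.2 j), ?_⟩, ?_, ?_⟩, ?_⟩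
  · apply Continuous.prodMk
    · exact (Real.continuous_sqrt.comp (by fun_prop))
    · exact continuous_pi fun j => by fun_prop
  · refine Prod.ext ?_ ?_
    · show Real.sqrt (c + (1 - ((0:I) : ℝ)) ^ 2 * Q) = p.1
      rw [show c + (1 - ((0:I) : ℝ)) ^ 2 * Q = p.1 ^ 2 by push_cast; rw [hpc]; ring]
      exact Real.sqrt_sq hpos.le
    · show (fun j => (1 - ((0:I) : ℝ)) * p.2 j) = p.2
      funext j; push_cast; ring
  · refine Prod.ext ?_ ?_
    · show Real.sqrt (c + (1 - ((1:I) : ℝ)) ^ 2 * Q) = Real.sqrt c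
      norm_num
    · show (fun j => (1 - ((1:I) : ℝ)) * p.2 j) = (0 : Fin e → ℝ)
      funext j; norm_num
  · intro t
    rw [mem_hSlice]
    show Real.sqrt (c + (1 - (t : ℝ)) ^ 2 * Q) ^ 2 - ∑ j, ((1 - (t : ℝ)) * p.2 j) ^ 2 = c
    rw [Real.sq_sqrt (key _)]
    have : ∑ j, ((1 - (t : ℝ)) * p.2 j) ^ 2 = (1 - (t : ℝ)) ^ 2 * Q := by
      rw [hQ, Finset.mul_sum]; exact Finset.sum_congr rfl fun j _ => by ring
    rw [this]; ring

/-- Negation of the first coordinate preserves the slice. -/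
lemma neg_mem_hSlice {e : ℕ} {c : ℝ} {p : ℝ × (Fin e → ℝ)} (hp : p ∈ hSlice e c) :
    ((-p.1, p.2) : ℝ × (Fin e → ℝ)) ∈ hSlice e c := by
  rw [mem_hSlice] at hp ⊢; simpa using hp

lemma joined_neg {e : ℕ} {c : ℝ} {p q : ℝ × (Fin e → ℝ)}
    (h : JoinedIn (hSlice e c) p q) :
    JoinedIn (hSlice e c) (-p.1, p.2) (-q.1, q.2) := by
  have hf : Continuous (fun x : ℝ × (Fin e → ℝ) => ((-x.1, x.2) : ℝ × (Fin e → ℝ))) := by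
    fun_prop
  have := (joinedIn_image h hf).mono (by
    rintro x ⟨y, hy, rfl⟩
    exact neg_mem_hSlice hy)
  exact this

/-- Points on a positive slice with the same sign of the first coordinate are joined. -/
lemma joined_pos {e : ℕ} {c : ℝ} (hc : 0 < c) {p q : ℝ × (Fin e → ℝ)}
    (hp : p ∈ hSlice e c) (hq : q ∈ hSlice e c) (hsign : 0 < p.1 ↔ 0 < q.1) :
    JoinedIn (hSlice e c) p q := by
  have hne : ∀ {r : ℝ × (Fin e → ℝ)}, r ∈ hSlice e c → r.1 ≠ 0 := by
    intro r hr h0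
    rw [mem_hSlice] at hr
    have := sq_sum_nonneg r.2
    nlinarith [hr]
  rcases lt_trichotomy p.1 0 with hp1 | hp1 | hp1
  · have hq1 : q.1 < 0 := by
      rcases lt_trichotomy q.1 0 with h | h | h
      · exact h
      · exact absurd h (hne hq)
      · exact absurd (hsign.2 h) (by linarith)
    have h1 : JoinedIn (hSlice e c) (-p.1, p.2) (Real.sqrt c, 0) :=
      joined_pos_base hc (by simpa using neg_mem_hSlice hp) (show (0:ℝ) < -p.1 by linarith)
    have h2 : JoinedIn (hSlice e c) (-q.1, q.2) (Real.sqrt c, 0) :=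
      joined_pos_base hc (by simpa using neg_mem_hSlice hq) (show (0:ℝ) < -q.1 by linarith)
    have := (joined_neg h1).trans (joined_neg h2).symm
    simpa using this
  · exact absurd hp1 (hne hp)
  · have hq1 : 0 < q.1 := hsign.1 hp1
    exact (joined_pos_base hc hp hp1).trans (joined_pos_base hc hq hq1).symm

/-- Two points on the (ℓ²-)sphere of radius `r > 0` in `Fin e → ℝ`, `e > 1`, are joined
within the sphere. -/
lemma joined_sphere {e : ℕ} (he : 1 < e) {r : ℝ} (hr : 0 < r) {w w' : Fin e → ℝ}
    (hw : ∑ j, w j ^ 2 = r ^ 2) (hw' : ∑ j, w' j ^ 2 = r ^ 2) :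
    JoinedIn {v : Fin e → ℝ | ∑ j, v j ^ 2 = r ^ 2} w w' := by
  classical
  set E := EuclideanSpace ℝ (Fin e)
  have hrank : 1 < Module.rank ℝ E := by
    rw [← Module.finrank_eq_rank, finrank_euclideanSpace_fin]
    exact_mod_cast he
  have hnorm : ∀ x : E, ‖x‖ = Real.sqrt (∑ j, x j ^ 2) := by
    intro x
    rw [EuclideanSpace.norm_eq]
    congr 1
    exact Finset.sum_congr rfl fun j _ => by rw [Real.norm_eq_abs, sq_abs]
  have hmem : ∀ x : E, (∑ j, x j ^ 2 = r ^ 2) → x ∈ Metric.sphere (0 : E) r := by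
    intro x hx
    rw [mem_sphere_zero_iff_norm, hnorm, hx]
    exact Real.sqrt_sq hr.le
  set x : E := (WithLp.equiv 2 (Fin e → ℝ)).symm w
  set x' : E := (WithLp.equiv 2 (Fin e → ℝ)).symm w'
  have hx : x ∈ Metric.sphere (0 : E) r := hmem _ hw
  have hx' : x' ∈ Metric.sphere (0 : E) r := hmem _ hw'
  have hpc := (isPathConnected_sphere hrank (0 : E) hr.le).joinedIn x hx x' hx'
  have hf : Continuous (fun y : E => (WithLp.equiv 2 (Fin e → ℝ) y : Fin e → ℝ)) :=
    (PiLp.continuous_ofLp 2 (fun _ : Fin e => ℝ))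
  have h1 := joinedIn_image hpc hf
  change JoinedIn _ w w' at h1
  refine h1.mono ?_
  rintro v ⟨y, hy, rfl⟩
  have hn : ‖y‖ = r := mem_sphere_zero_iff_norm.1 hy
  rw [hnorm] at hn
  have h2 : (Real.sqrt (∑ j, y j ^ 2)) ^ 2 = r ^ 2 := by rw [hn]
  rw [Real.sq_sqrt (sq_sum_nonneg _)] at h2
  exact h2

/-- On a nonpositive slice with `e > 1`, any two points are joined. -/
lemma joined_nonpos {e : ℕ} (he : 1 < e) {c : ℝ} (hc : c ≤ 0) {p q : ℝ × (Fin e → ℝ)}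
    (hp : p ∈ hSlice e c) (hq : q ∈ hSlice e c) :
    JoinedIn (hSlice e c) p q := by
  haveI : NeZero e := ⟨by omega⟩
  set w₀ : Fin e → ℝ := fun j => if j = 0 then Real.sqrt (-c) else 0 with hw₀
  have hQw₀ : ∑ j, (w₀ j) ^ 2 = -c := by
    have hterm : ∀ j : Fin e, (w₀ j) ^ 2 = if j = 0 then -c else 0 := by
      intro j
      by_cases hj : j = 0 <;> simp [hw₀, hj, Real.sq_sqrt (neg_nonneg.2 hc)]
    rw [Finset.sum_congr rfl fun j _ => hterm j,
      Finset.sum_ite_eq' Finset.univ (0 : Fin e) (fun _ => -c)]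
    simp
  have hbase : ((0 : ℝ), w₀) ∈ hSlice e c := by
    rw [mem_hSlice]; simp [hQw₀]
  -- every point is joined to the base point
  suffices h : ∀ {p : ℝ × (Fin e → ℝ)}, p ∈ hSlice e c → JoinedIn (hSlice e c) p ((0 : ℝ), w₀) by
    exact (h hp).trans (h hq).symm
  clear hp hq p q
  intro p hp
  set Q : ℝ := ∑ j, (p.2 j) ^ 2 with hQ
  have hQ0 : 0 ≤ Q := sq_sum_nonneg _
  have hpc : p.1 ^ 2 = c + Q := by have := hp; rw [mem_hSlice] at this; linarith
  have hD : Q = p.1 ^ 2 - c := by linarith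
  rcases eq_or_lt_of_le hQ0 with hQz | hQpos
  · -- Q = 0 : then p.1 = 0, c = 0, p.2 = 0, and w₀ = 0
    have hc0 : c = 0 := by nlinarith [sq_nonneg p.1]
    have hp1 : p.1 = 0 := by nlinarith
    have hp2 : p.2 = 0 := by
      funext j
      have := Finset.sum_eq_zero_iff_of_nonneg (fun i _ => sq_nonneg (p.2 i)) |>.1 hQz.symm j (Finset.mem_univ j)
      exact pow_eq_zero_iff (n := 2) (by norm_num) |>.1 this
    have hw0 : w₀ = 0 := by
      funext j; rw [hw₀]; simp [hc0]
    have : p = ((0 : ℝ), w₀) := by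
      rw [Prod.ext_iff]; exact ⟨hp1, by rw [hp2, hw0]⟩
    rw [this]; exact JoinedIn.refl hbase
  · -- Q > 0 : first shrink p.1 to 0
    have step1 : JoinedIn (hSlice e c)
        p ((0 : ℝ), fun j => p.2 j * (Real.sqrt (-c) / Real.sqrt Q)) := by
      have key : ∀ t : ℝ, 0 ≤ (t * p.1) ^ 2 - c := by
        intro t; nlinarith [sq_nonneg (t * p.1)]
      have hsQ : Real.sqrt Q > 0 := Real.sqrt_pos.2 hQpos
      refine ⟨⟨⟨fun t => ((1 - (t : ℝ)) * p.1,
          fun j => p.2 j * (Real.sqrt (((1 - (t : ℝ)) * p.1) ^ 2 - c) / Real.sqrt Q)), ?_⟩, ?_, ?_⟩, ?_⟩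
      · apply Continuous.prodMk
        · fun_prop
        · exact continuous_pi fun j => by fun_prop
      · refine Prod.ext ?_ ?_
        · show (1 - ((0:I) : ℝ)) * p.1 = p.1
          norm_num
        · show (fun j => p.2 j * (Real.sqrt (((1 - ((0:I) : ℝ)) * p.1) ^ 2 - c) / Real.sqrt Q)) = p.2
          funext j
          have : ((1 - ((0:I) : ℝ)) * p.1) ^ 2 - c = Q := by push_cast; rw [hD]; ring
          rw [this, div_self hsQ.ne']
          ring
      · refine Prod.ext ?_ ?_
        · show (1 - ((1:I) : ℝ)) * p.1 = 0
          norm_num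
        · show (fun j => p.2 j * (Real.sqrt (((1 - ((1:I) : ℝ)) * p.1) ^ 2 - c) / Real.sqrt Q))
            = fun j => p.2 j * (Real.sqrt (-c) / Real.sqrt Q)
          funext j; norm_num
      · intro t
        rw [mem_hSlice]
        show ((1 - (t : ℝ)) * p.1) ^ 2
            - ∑ j, (p.2 j * (Real.sqrt (((1 - (t : ℝ)) * p.1) ^ 2 - c) / Real.sqrt Q)) ^ 2 = c
        have hterm : ∀ j : Fin e, (p.2 j * (Real.sqrt (((1 - (t : ℝ)) * p.1) ^ 2 - c) / Real.sqrt Q)) ^ 2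
            = (p.2 j) ^ 2 * ((((1 - (t : ℝ)) * p.1) ^ 2 - c) / Q) := by
          intro j
          rw [mul_pow, div_pow, Real.sq_sqrt (key _), Real.sq_sqrt hQ0]
        have hsum : ∑ j, (p.2 j * (Real.sqrt (((1 - (t : ℝ)) * p.1) ^ 2 - c) / Real.sqrt Q)) ^ 2
            = Q * ((((1 - (t : ℝ)) * p.1) ^ 2 - c) / Q) := by
          rw [Finset.sum_congr rfl fun j _ => hterm j, ← Finset.sum_mul, ← hQ]
        rw [hsum, mul_div_cancel₀ _ hQpos.ne']
        ring
    -- then move along the sphere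
    rcases eq_or_lt_of_le hc with hc0 | hcneg
    · -- c = 0
      have : (fun j => p.2 j * (Real.sqrt (-c) / Real.sqrt Q)) = w₀ := by
        funext j
        simp [hw₀, hc0]
      rw [this] at step1
      exact step1
    · -- c < 0 : sphere of radius √(-c)
      set r : ℝ := Real.sqrt (-c) with hrdef
      have hr : 0 < r := Real.sqrt_pos.2 (by linarith)
      have hr2 : r ^ 2 = -c := Real.sq_sqrt (by linarith)
      have hmid : ∑ j, (p.2 j * (r / Real.sqrt Q)) ^ 2 = r ^ 2 := by
        have hterm : ∀ j : Fin e, (p.2 j * (r / Real.sqrt Q)) ^ 2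
            = (p.2 j) ^ 2 * (r ^ 2 / Q) := by
          intro j
          rw [mul_pow, div_pow, Real.sq_sqrt hQ0]
        rw [Finset.sum_congr rfl fun j _ => hterm j, ← Finset.sum_mul, ← hQ]
        field_simp
      have hw₀r : ∑ j, (w₀ j) ^ 2 = r ^ 2 := by rw [hQw₀, hr2]
      have hsph := joined_sphere he hr hmid hw₀r
      have h2 : JoinedIn (hSlice e c)
          ((0 : ℝ), fun j => p.2 j * (r / Real.sqrt Q)) ((0 : ℝ), w₀) := by
        refine (joinedIn_image hsph
          (f := fun v : Fin e → ℝ => (((0 : ℝ), v) : ℝ × (Fin e → ℝ))) (by fun_prop)).mono ?_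
        rintro x ⟨y, hy, rfl⟩
        rw [mem_hSlice]
        show (0 : ℝ) ^ 2 - ∑ j, y j ^ 2 = c
        rw [show ∑ j, y j ^ 2 = r ^ 2 from hy, hr2]
        ring
      exact step1.trans h2

lemma mem_invariantSet {l e : ℕ} {c : Fin l → ℝ}
    {θ : (Fin l → Fin 1 → ℝ) × (Fin e → Fin l → ℝ)} :
    θ ∈ invariantSet l 1 e c ↔ ∀ k, ((θ.1 k 0, fun j => θ.2 j k) : ℝ × (Fin e → ℝ)) ∈ hSlice e (c k) := by
  constructor
  · intro h k
    have := h k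
    rw [Fin.sum_univ_one] at this
    exact this
  · intro h k
    have := h k
    rw [mem_hSlice] at this
    rw [Fin.sum_univ_one]
    exact this

/-- Joinedness per slice lifts to the whole invariant set. -/
lemma joined_invariantSet {l e : ℕ} {c : Fin l → ℝ}
    {θ θ' : (Fin l → Fin 1 → ℝ) × (Fin e → Fin l → ℝ)}
    (h : ∀ k, JoinedIn (hSlice e (c k))
      ((θ.1 k 0, fun j => θ.2 j k) : ℝ × (Fin e → ℝ))
      ((θ'.1 k 0, fun j => θ'.2 j k) : ℝ × (Fin e → ℝ))) :
    JoinedIn (invariantSet l 1 e c) θ θ' := by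
  set γ : ∀ k, Path ((θ.1 k 0, fun j => θ.2 j k) : ℝ × (Fin e → ℝ))
      ((θ'.1 k 0, fun j => θ'.2 j k) : ℝ × (Fin e → ℝ)) := fun k => (h k).somePath with hγ
  refine ⟨⟨⟨fun t => (fun k _ => (γ k t).1, fun j k => (γ k t).2 j), ?_⟩, ?_, ?_⟩, ?_⟩
  · apply Continuous.prodMk
    · exact continuous_pi fun k => continuous_pi fun _ =>
        (continuous_fst.comp (γ k).continuous)
    · exact continuous_pi fun j => continuous_pi fun k =>
        (continuous_apply j).comp (continuous_snd.comp (γ k).continuous)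
  · refine Prod.ext ?_ ?_
    · show (fun k (_ : Fin 1) => (γ k 0).1) = θ.1
      funext k i
      rw [(γ k).source]
      exact congrArg (θ.1 k) (Subsingleton.elim 0 i)
    · show (fun j k => (γ k 0).2 j) = θ.2
      funext j k
      rw [(γ k).source]
  · refine Prod.ext ?_ ?_
    · show (fun k (_ : Fin 1) => (γ k 1).1) = θ'.1
      funext k i
      rw [(γ k).target]
      exact congrArg (θ'.1 k) (Subsingleton.elim 0 i)
    · show (fun j k => (γ k 1).2 j) = θ'.2
      funext j k
      rw [(γ k).target]
  · intro t
    show ∀ k, _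
    intro k
    have := (h k).somePath_mem t
    rw [mem_hSlice] at this
    show ∑ i : Fin 1, ((γ k t).1) ^ 2 - ∑ j, ((γ k t).2 j) ^ 2 = c k
    rw [Fin.sum_univ_one]
    exact this

lemma hSlice_fst_ne_zero {e : ℕ} {c : ℝ} (hc : 0 < c) {p : ℝ × (Fin e → ℝ)}
    (hp : p ∈ hSlice e c) : p.1 ≠ 0 := by
  intro h0
  rw [mem_hSlice] at hp
  have := sq_sum_nonneg p.2
  nlinarith

set_option synthInstance.maxHeartbeats 1000000 in
set_option maxHeartbeats 1000000 in
theorem main (l e : ℕ) (he : 1 < e) (c : Fin l → ℝ) :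
    Nat.card (ConnectedComponents ↥(invariantSet l 1 e c)) =
      2 ^ (Finset.univ.filter (fun k => 0 < c k)).card := by
  classical
  set H := invariantSet l 1 e c with hH
  -- the locally-constant sign map
  set s : ↥H → ({k : Fin l // 0 < c k} → Bool) :=
    fun θ k => decide (0 < (θ : (Fin l → Fin 1 → ℝ) × (Fin e → Fin l → ℝ)).1 k.1 0) with hs
  have hne : ∀ (k : {k : Fin l // 0 < c k}) (θ : ↥H),
      (θ : (Fin l → Fin 1 → ℝ) × (Fin e → Fin l → ℝ)).1 k.1 0 ≠ 0 := by
    intro k θ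
    have hmem := (mem_invariantSet.1 θ.2) k.1
    exact hSlice_fst_ne_zero k.2 hmem
  have hscont : Continuous s := by
    refine continuous_pi fun k => ?_
    have hf : Continuous (fun θ : ↥H =>
        (θ : (Fin l → Fin 1 → ℝ) × (Fin e → Fin l → ℝ)).1 k.1 0) :=
      (continuous_apply (0 : Fin 1)).comp
        ((continuous_apply k.1).comp (continuous_fst.comp continuous_subtype_val))
    rw [continuous_discrete_rng]
    intro b
    cases b
    · have : (fun θ : ↥H => decide (0 < (θ : (Fin l → Fin 1 → ℝ) × (Fin e → Fin l → ℝ)).1 k.1 0)) ⁻¹' {false}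
          = (fun θ : ↥H => (θ : (Fin l → Fin 1 → ℝ) × (Fin e → Fin l → ℝ)).1 k.1 0) ⁻¹' (Set.Iio 0) := by
        ext θ
        simp only [Set.mem_preimage, Set.mem_singleton_iff, decide_eq_false_iff_not, not_lt,
          Set.mem_Iio]
        constructor
        · intro h; exact lt_of_le_of_ne h (hne k θ)
        · intro h; exact h.le
      rw [this]
      exact isOpen_Iio.preimage hf
    · have : (fun θ : ↥H => decide (0 < (θ : (Fin l → Fin 1 → ℝ) × (Fin e → Fin l → ℝ)).1 k.1 0)) ⁻¹' {true}
          = (fun θ : ↥H => (θ : (Fin l → Fin 1 → ℝ) × (Fin e → Fin l → ℝ)).1 k.1 0) ⁻¹' (Set.Ioi 0) := by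
        ext θ
        simp [Set.mem_preimage, decide_eq_true_eq]
      rw [this]
      exact isOpen_Ioi.preimage hf
  set Φ : ConnectedComponents ↥H → ({k : Fin l // 0 < c k} → Bool) :=
    hscont.connectedComponentsLift with hΦ
  have hinj : Function.Injective Φ := by
    intro x y hxy
    obtain ⟨θ, rfl⟩ := ConnectedComponents.surjective_coe x
    obtain ⟨θ', rfl⟩ := ConnectedComponents.surjective_coe y
    rw [hΦ, hscont.connectedComponentsLift_apply_coe, hscont.connectedComponentsLift_apply_coe] at hxy
    -- same sign pattern, so joined slice by slice
    have hjoin : JoinedIn H (θ : _) (θ' : _) := by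
      apply joined_invariantSet
      intro k
      by_cases hk : 0 < c k
      · refine joined_pos hk (mem_invariantSet.1 θ.2 k) (mem_invariantSet.1 θ'.2 k) ?_
        have := congrFun hxy ⟨k, hk⟩
        rw [hs] at this
        simpa [decide_eq_decide] using this
      · exact joined_nonpos he (le_of_not_gt hk) (mem_invariantSet.1 θ.2 k)
          (mem_invariantSet.1 θ'.2 k)
    have hjsub := hjoin.joined_subtype
    have hmem : (⟨(θ' : _), hjoin.target_mem⟩ : ↥H) ∈ connectedComponent (⟨(θ : _), hjoin.source_mem⟩ : ↥H) :=
      pathComponent_subset_component _ hjsub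
    have : ((⟨(θ : _), hjoin.source_mem⟩ : ↥H) : ConnectedComponents ↥H)
        = (⟨(θ' : _), hjoin.target_mem⟩ : ↥H) := (ConnectedComponents.coe_eq_coe' ).2 hmem |>.symm
    simpa [Subtype.coe_eta] using this
  have hsurj : Function.Surjective Φ := by
    intro sg
    set θsg : (Fin l → Fin 1 → ℝ) × (Fin e → Fin l → ℝ) :=
      (fun k _ => if hk : 0 < c k then (if sg ⟨k, hk⟩ then Real.sqrt (c k) else -Real.sqrt (c k)) else 0,
       fun j k => if 0 < c k then 0 else if j = (⟨0, by omega⟩ : Fin e) then Real.sqrt (-c k) else 0) with hθsg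
    have hmem : θsg ∈ H := by
      rw [hH, mem_invariantSet]
      intro k
      rw [mem_hSlice]
      show θsg.1 k 0 ^ 2 - ∑ j, (θsg.2 j k) ^ 2 = c k
      by_cases hk : 0 < c k
      · have h1 : (θsg.1 k 0) ^ 2 = c k := by
          rw [hθsg]
          simp only [dif_pos hk]
          split
          · exact Real.sq_sqrt hk.le
          · rw [neg_pow]
            simp [Real.sq_sqrt hk.le]
        have h2 : ∀ j, θsg.2 j k = 0 := by
          intro j; rw [hθsg]; simp [hk]
        rw [h1]
        rw [Finset.sum_congr rfl fun j _ => by rw [h2 j]]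
        simp
      · have h1 : θsg.1 k 0 = 0 := by rw [hθsg]; simp [hk]
        have h2 : ∑ j, (θsg.2 j k) ^ 2 = -(c k) := by
          have hterm : ∀ j : Fin e, (θsg.2 j k) ^ 2
              = if j = (⟨0, by omega⟩ : Fin e) then -(c k) else 0 := by
            intro j
            rw [hθsg]
            simp only [if_neg hk]
            by_cases hj : j = (⟨0, by omega⟩ : Fin e) <;>
              simp [hj, Real.sq_sqrt (neg_nonneg.2 (le_of_not_gt hk))]
          rw [Finset.sum_congr rfl fun j _ => hterm j,
            Finset.sum_ite_eq' Finset.univ _ (fun _ => -(c k))]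
          simp
        rw [h1, h2]
        ring
    refine ⟨((⟨θsg, hmem⟩ : ↥H) : ConnectedComponents ↥H), ?_⟩
    rw [hΦ, hscont.connectedComponentsLift_apply_coe]
    funext k
    rw [hs]
    simp only
    obtain ⟨k, hk⟩ := k
    show decide (0 < θsg.1 k 0) = sg ⟨k, hk⟩
    cases hb : sg ⟨k, hk⟩ with
    | false =>
      have h3 : ¬ (0 < -Real.sqrt (c k)) := by
        simp [Real.sqrt_nonneg]
      simp [hθsg, hk, hb, h3]
    | true =>
      simp [hθsg, hk, hb, Real.sqrt_pos.2 hk]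
  have hbij : Function.Bijective Φ := ⟨hinj, hsurj⟩
  rw [Nat.card_eq_of_bijective Φ hbij]
  rw [Nat.card_eq_fintype_card, Fintype.card_fun, Fintype.card_bool, Fintype.card_subtype]

end InvProof

/-- If `d = 1` and `e > 1`, the invariant set `H(c)` has exactly
`2^{l₊}` connected components, where `l₊` is the number of indices `k` with
`c_k > 0`. -/
theorem invariantSet_components_scalar_input (l e : ℕ) (he : 1 < e) (c : Fin l → ℝ) :
    Nat.card (ConnectedComponents ↥(invariantSet l 1 e c)) =
      2 ^ (Finset.univ.filter (fun k => 0 < c k)).card := by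
  exact InvProof.main l e he c
end

section
/- Number of connected components in the fully scalar case: if d = 1 and e = 1, then for every c ∈ ℝ^l the invariant set H(c) ⊆ ℝ^{l×1} × ℝ^{1×l}, consisting of all (W¹, W²) such that (W¹_{k1})² − (W²_{1k})² = c_k for every k ∈ {1,…,l}, has exactly 2^{l_+ + l_-} connected components, where l_+ and l_- are the numbers of indices k with c_k > 0 and c_k < 0, respectively. -/
/-!
For `d = e = 1` the constraints decouple neuron by neuron, so `H(c)` is homeomorphic to the
product of the plane conics `x² - y² = c_k`, and the components of a product are the products of
components. For `c_k = 0` the conic is a pair of crossing lines, hence connected; for `c_k ≠ 0`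
the substitution `u = x + y`, `x - y = c_k / u` identifies it with `ℝ ∖ {0}`, which has two
components.
-/

open Set

section ConnectedComponents

variable {X Y : Type*} [TopologicalSpace X] [TopologicalSpace Y]

def Homeomorph.connectedComponentsEquiv (e : X ≃ₜ Y) :
    ConnectedComponents X ≃ ConnectedComponents Y where
  toFun := e.continuous.connectedComponentsMap
  invFun := e.symm.continuous.connectedComponentsMap
  left_inv := ConnectedComponents.surjective_coe.forall.2 fun x => by
    simp [Continuous.connectedComponentsMap_mk]
  right_inv := ConnectedComponents.surjective_coe.forall.2 fun y => by
    simp [Continuous.connectedComponentsMap_mk]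

noncomputable def ConnectedComponents.piEquiv {ι : Type*} {Z : ι → Type*}
    [∀ i, TopologicalSpace (Z i)] :
    ConnectedComponents (∀ i, Z i) ≃ ∀ i, ConnectedComponents (Z i) :=
  .ofBijective (fun x i => (continuous_apply i).connectedComponentsMap x) <| by
    refine ⟨ConnectedComponents.surjective_coe.forall₂.2 fun x y hxy => ?_, fun z => ?_⟩
    · simp only [Continuous.connectedComponentsMap_mk, funext_iff,
        ConnectedComponents.coe_eq_coe] at hxy
      rw [ConnectedComponents.coe_eq_coe, connectedComponent_pi, connectedComponent_pi]
      simp_rw [hxy]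
    · choose x hx using fun i => ConnectedComponents.surjective_coe (z i)
      exact ⟨.mk x, funext fun i => by simp [Continuous.connectedComponentsMap_mk, hx]⟩

theorem ConnectedComponents.natCard_eq_two_of_isClopen {U : Set X} (hU : IsClopen U)
    (h₁ : IsConnected U) (h₂ : IsConnected Uᶜ) : Nat.card (ConnectedComponents X) = 2 := by
  rw [Nat.card_congr (equivOfIsClopenOfIsConnected (U := fun b : Bool => cond b U Uᶜ)
    (Bool.forall_bool.2 ⟨hU.compl, hU⟩) ?_ (union_eq_iUnion.symm.trans (union_compl_self U))
    (Bool.forall_bool.2 ⟨h₂, h₁⟩)), Nat.card_eq_fintype_card, Fintype.card_bool]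
  rintro (_ | _) (_ | _) h
  exacts [absurd rfl h, disjoint_compl_left, disjoint_compl_right, absurd rfl h]

end ConnectedComponents

theorem natCard_connectedComponents_compl_zero :
    Nat.card (ConnectedComponents ({0}ᶜ : Set ℝ)) = 2 := by
  have hval : IsOpenMap ((↑) : ({0}ᶜ : Set ℝ) → ℝ) :=
    isOpen_compl_singleton.isOpenMap_subtype_val
  have hneg :
      {u : ({0}ᶜ : Set ℝ) | 0 < (u : ℝ)}ᶜ = {u : ({0}ᶜ : Set ℝ) | (u : ℝ) < 0} := by
    ext ⟨u, hu⟩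
    simp only [mem_compl_iff, mem_ofPred_eq, not_lt]
    exact ⟨fun h => h.lt_of_ne hu, le_of_lt⟩
  refine ConnectedComponents.natCard_eq_two_of_isClopen (U := {u | 0 < (u : ℝ)})
    ⟨?_, isOpen_lt continuous_const continuous_subtype_val⟩ ?_ ?_
  · rw [← isOpen_compl_iff, hneg]
    exact isOpen_lt continuous_subtype_val continuous_const
  · exact isConnected_Ioi.preimage_of_isOpenMap Subtype.val_injective hval
      fun u hu => ⟨⟨u, ne_of_gt hu⟩, rfl⟩
  · rw [hneg]
    exact isConnected_Iio.preimage_of_isOpenMap Subtype.val_injective hval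
      fun u hu => ⟨⟨u, ne_of_lt hu⟩, rfl⟩

def hyperbola (a : ℝ) : Set (ℝ × ℝ) := {p | p.1 ^ 2 - p.2 ^ 2 = a}

theorem isConnected_hyperbola_zero : IsConnected (hyperbola 0) := by
  have h : hyperbola 0 = range (fun t : ℝ => (t, t)) ∪ range (fun t : ℝ => (t, -t)) := by
    ext ⟨x, y⟩
    simp only [hyperbola, mem_ofPred_eq, mem_union, mem_range, Prod.mk.injEq, exists_eq_left,
      sub_eq_zero, sq_eq_sq_iff_eq_or_eq_neg]
    grind
  rw [h]
  exact (isConnected_range (by fun_prop)).union ⟨(0, 0), ⟨0, rfl⟩, ⟨0, by simp⟩⟩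
    (isConnected_range (by fun_prop))

noncomputable def hyperbolaHomeomorphCompl {a : ℝ} (ha : a ≠ 0) :
    hyperbola a ≃ₜ ({0}ᶜ : Set ℝ) where
  toFun p := ⟨p.1.1 + p.1.2, fun h => ha <| by
    rw [← p.2.out, sq_sub_sq, mem_singleton_iff.1 h, zero_mul]⟩
  invFun u := ⟨((u + a / u) / 2, (u - a / u) / 2), by
    have hu : (u : ℝ) ≠ 0 := u.2
    simp only [hyperbola, mem_ofPred_eq]
    field_simp
    ring⟩
  left_inv := by
    rintro ⟨⟨x, y⟩, hp : x ^ 2 - y ^ 2 = a⟩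
    subst hp
    have hxy : x + y ≠ 0 := fun h => ha (by rw [sq_sub_sq, h, zero_mul])
    ext <;> field_simp <;> ring
  right_inv u := by ext; simp only; ring
  continuous_toFun := by fun_prop
  continuous_invFun := by
    have : Continuous fun u : ({0}ᶜ : Set ℝ) => a / u :=
      continuous_const.div continuous_subtype_val fun u => u.2
    fun_prop

theorem natCard_connectedComponents_hyperbola (a : ℝ) :
    Nat.card (ConnectedComponents (hyperbola a)) = if a = 0 then 1 else 2 := by
  split_ifs with ha
  · subst ha
    have := isConnected_iff_connectedSpace.1 isConnected_hyperbola_zero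
    exact Nat.card_unique
  · rw [← natCard_connectedComponents_compl_zero]
    exact Nat.card_congr (hyperbolaHomeomorphCompl ha).connectedComponentsEquiv

def invariantSetHomeomorphPi (l : ℕ) (c : Fin l → ℝ) :
    invariantSet l 1 1 c ≃ₜ ∀ k, hyperbola (c k) where
  toFun θ k := ⟨(θ.1.1 k 0, θ.1.2 0 k), by simpa [hyperbola] using θ.2 k⟩
  invFun p := ⟨(fun k _ => (p k).1.1, fun _ k => (p k).1.2),
    fun k => by simpa [invariantSet] using (p k).2.out⟩
  left_inv θ := by ext k i <;> simp [Fin.fin_one_eq_zero]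
  right_inv p := rfl
  continuous_toFun := by fun_prop
  continuous_invFun := by fun_prop

open Finset in
theorem Finset.card_filter_ne_zero_eq_add {ι α : Type*} [Fintype ι] [DecidableEq ι]
    [LinearOrder α] [Zero α] (c : ι → α) :
    #{k | c k ≠ 0} = #{k | 0 < c k} + #{k | c k < 0} := by
  rw [← card_union_of_disjoint (disjoint_filter.2 fun _ _ h₁ h₂ => h₁.asymm h₂),
    ← filter_or]
  simp only [ne_iff_lt_or_gt, or_comm]

/-- If `d = 1` and `e = 1`, the invariant set `H(c)` has exactly
`2^{l₊ + l₋}` connected components, where `l₊` and `l₋` are the numbers of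
indices `k` with `c_k > 0` and `c_k < 0`, respectively. -/
theorem invariantSet_components_fully_scalar (l : ℕ) (c : Fin l → ℝ) :
    Nat.card (ConnectedComponents ↥(invariantSet l 1 1 c)) =
      2 ^ ((Finset.univ.filter (fun k => 0 < c k)).card
            + (Finset.univ.filter (fun k => c k < 0)).card) := by
  rw [Nat.card_congr ((invariantSetHomeomorphPi l c).connectedComponentsEquiv.trans
    ConnectedComponents.piEquiv), Nat.card_pi]
  simp_rw [natCard_connectedComponents_hyperbola]
  rw [Finset.prod_ite, Finset.prod_const_one, Finset.prod_const, one_mul,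
    ← Finset.card_filter_ne_zero_eq_add]
end
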